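/- Let C be a pointed, spanning polyhedral cone in E = ℝⁿ and let D ⊆ E be a downset. If σ' ⊆ σ are faces of C, then D^{σ'} ⊆ D^σ; that is, every a ∈ E with a − σ'° ⊆ D also satisfies a − σ° ⊆ D. -/

import Mathlib

open Pointwise

/-- A polyhedral cone in `ℝⁿ`: an intersection of finitely many closed linear half-spaces. -/
def IsPolyCone {n : ℕ} (C : Set (Fin n → ℝ)) : Prop :=
  ∃ (m : ℕ) (ℓ : Fin m → ((Fin n → ℝ) →ₗ[ℝ] ℝ)), C = {x | ∀ i, 0 ≤ ℓ i x}

/-- A face of a cone `C`: a subset of `C` containing `0`, closed under addition, and such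
that whenever `x, y ∈ C` and `x + y` lies in the subset, both `x` and `y` do. -/
def IsConeFace {M : Type*} [AddCommMonoid M] (σ C : Set M) : Prop :=
  σ ⊆ C ∧ (0 : M) ∈ σ ∧ (∀ x ∈ σ, ∀ y ∈ σ, x + y ∈ σ) ∧
    ∀ x ∈ C, ∀ y ∈ C, x + y ∈ σ → x ∈ σ ∧ y ∈ σ

/-- A downset for the partial order `x ≼ y ↔ y - x ∈ C`. -/
def IsDownset {n : ℕ} (C D : Set (Fin n → ℝ)) : Prop :=
  ∀ x y : Fin n → ℝ, y ∈ D → y - x ∈ C → x ∈ D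

/-- The upper boundary downset `D^σ = {a | a - σ° ⊆ D}`. -/
def upSet {n : ℕ} (D σ : Set (Fin n → ℝ)) : Set (Fin n → ℝ) :=
  {a | ∀ s ∈ intrinsicInterior ℝ σ, a - s ∈ D}

/-- `a` is a cogenerator of the downset `D` along the face `τ` with nadir `σ`:
`(a + C) ∩ D^σ = a + τ` and no face `σ''` with `τ ⊆ σ'' ⊊ σ` satisfies `a - σ''° ⊆ D`. -/
def IsCogen {n : ℕ} (C D τ σ : Set (Fin n → ℝ)) (a : Fin n → ℝ) : Prop :=
  (({a} + C) ∩ upSet D σ = {a} + τ) ∧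
  ∀ σ'' : Set (Fin n → ℝ), IsConeFace σ'' C → τ ⊆ σ'' → σ'' ⊂ σ →
    ¬ (∀ s ∈ intrinsicInterior ℝ σ'', a - s ∈ D)

/-- A `σ`-vicinity of a point `p` of `E ⧸ span τ`: the image under the quotient map of
`u + σ° + C` for some `u` admitting a representative `w` of `p` with `w - u ∈ σ°`. -/
def IsVic {n : ℕ} (C σ τ : Set (Fin n → ℝ))
    (p : (Fin n → ℝ) ⧸ Submodule.span ℝ τ)
    (V : Set ((Fin n → ℝ) ⧸ Submodule.span ℝ τ)) : Prop :=
  ∃ u w : Fin n → ℝ, (Submodule.span ℝ τ).mkQ w = p ∧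
    w - u ∈ intrinsicInterior ℝ σ ∧
    V = (Submodule.span ℝ τ).mkQ '' ({u} + intrinsicInterior ℝ σ + C)

/-!
Let `a - σ'° ⊆ D`, `s ∈ σ°` and pick any `t ∈ σ'°`. As `t` and `0` lie in `σ`, the point `s` can be
pushed a little in the direction `-t` without leaving `σ`: `s - δ • t ∈ σ ⊆ C` for some `δ > 0`.
Faces of a cone are cones, so `δ • t ∈ σ'°`, hence `a - δ • t ∈ D`, and `a - s ≼ a - δ • t` puts `a - s` in `D`.
-/

open Set Filter Topology

theorem intrinsicInterior_smul₀ {𝕜 E : Type*} [Field 𝕜] [AddCommGroup E] [Module 𝕜 E]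
    [TopologicalSpace E] [ContinuousConstSMul 𝕜 E] {t : 𝕜} (ht : t ≠ 0) (s : Set E) :
    intrinsicInterior 𝕜 (t • s) = t • intrinsicInterior 𝕜 s := by
  rw [← image_smul, ← image_smul]
  exact (ContinuousLinearEquiv.smulLeft (R₁ := 𝕜) (Units.mk0 t ht)).toContinuousAffineEquiv
    |>.intrinsicInterior_image s

theorem eventually_add_smul_mem_of_mem_intrinsicInterior {E : Type*} [AddCommGroup E]
    [Module ℝ E] [TopologicalSpace E] [IsTopologicalAddGroup E] [ContinuousSMul ℝ E]
    {σ : Set E} {s v : E} (hs : s ∈ intrinsicInterior ℝ σ)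
    (hv : v ∈ (affineSpan ℝ σ).direction) : ∀ᶠ δ in 𝓝 (0 : ℝ), s + δ • v ∈ σ := by
  obtain ⟨x, hx, rfl⟩ := hs
  let line : ℝ → affineSpan ℝ σ := fun δ =>
    ⟨δ • v + x, AffineSubspace.vadd_mem_of_mem_direction (Submodule.smul_mem _ δ hv) x.2⟩
  have hline : Continuous line := by fun_prop
  have hline0 : line 0 = x := by ext1; simp [line]
  filter_upwards [hline.continuousAt (x := 0) (hline0 ▸ mem_interior_iff_mem_nhds.1 hx)]
    with δ hδ
  simpa [line, add_comm] using hδ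

theorem IsPolyCone.smul_mem {n : ℕ} {C : Set (Fin n → ℝ)} (hC : IsPolyCone C) {r : ℝ}
    (hr : 0 ≤ r) {x : Fin n → ℝ} (hx : x ∈ C) : r • x ∈ C := by
  obtain ⟨m, ℓ, rfl⟩ := hC
  intro i
  simpa using mul_nonneg hr (hx i)

namespace IsConeFace

theorem nsmul_mem {M : Type*} [AddCommMonoid M] {σ C : Set M} (hσ : IsConeFace σ C) (k : ℕ)
    {x : M} (hx : x ∈ σ) : k • x ∈ σ := by
  induction k with
  | zero => simpa using hσ.2.1
  | succ k ih => simpa [succ_nsmul] using hσ.2.2.1 _ ih _ hx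

variable {E : Type*} [AddCommGroup E] [Module ℝ E] {σ C : Set E}
  (hC : ∀ ⦃r : ℝ⦄, 0 ≤ r → ∀ ⦃x⦄, x ∈ C → r • x ∈ C) (hσ : IsConeFace σ C)
include hC hσ

theorem smul_mem_of_le_one {r : ℝ} (hr₀ : 0 ≤ r) (hr₁ : r ≤ 1) {x : E} (hx : x ∈ σ) :
    r • x ∈ σ := by
  have hsum : r • x + (1 - r) • x ∈ σ := by simpa [← add_smul] using hx
  exact (hσ.2.2.2 _ (hC hr₀ (hσ.1 hx)) _ (hC (sub_nonneg.2 hr₁) (hσ.1 hx)) hsum).1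

theorem smul_mem {r : ℝ} (hr : 0 ≤ r) {x : E} (hx : x ∈ σ) : r • x ∈ σ := by
  obtain ⟨k, hk⟩ := exists_nat_gt r
  have hk₀ : (0 : ℝ) < k := hr.trans_lt hk
  have hkx : (k : ℝ) • x ∈ σ := by simpa [Nat.cast_smul_eq_nsmul] using hσ.nsmul_mem k hx
  have hsplit : r • x = (r / k) • ((k : ℝ) • x) := by rw [smul_smul, div_mul_cancel₀ _ hk₀.ne']
  rw [hsplit]
  exact hσ.smul_mem_of_le_one hC (div_nonneg hr hk₀.le) ((div_le_one hk₀).2 hk.le) hkx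

theorem convex : Convex ℝ σ := fun _ hx _ hy _ _ ha hb _ =>
  hσ.2.2.1 _ (hσ.smul_mem hC ha hx) _ (hσ.smul_mem hC hb hy)

theorem smul_set_eq {r : ℝ} (hr : 0 < r) : r • σ = σ := by
  refine (smul_set_subset_iff.2 fun x hx => hσ.smul_mem hC hr.le hx).antisymm fun x hx => ?_
  exact ⟨r⁻¹ • x, hσ.smul_mem hC (inv_nonneg.2 hr.le) hx, smul_inv_smul₀ hr.ne' x⟩

end IsConeFace

theorem upSet_mono_faces_general {n : ℕ} (C D σ σ' : Set (Fin n → ℝ))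
    (hC : IsPolyCone C)
    (hD : IsDownset C D) (hσ : IsConeFace σ C) (hσ' : IsConeFace σ' C)
    (hss : σ' ⊆ σ) :
    upSet D σ' ⊆ upSet D σ := by
  intro a ha s hs
  have hcone : ∀ ⦃r : ℝ⦄, 0 ≤ r → ∀ ⦃x⦄, x ∈ C → r • x ∈ C := fun _ hr _ hx => hC.smul_mem hr hx
  obtain ⟨t, ht⟩ := Set.Nonempty.intrinsicInterior (hσ'.convex hcone) ⟨0, hσ'.2.1⟩
  have hdir : -t ∈ (affineSpan ℝ σ).direction := by
    rw [direction_affineSpan]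
    simpa using vsub_mem_vectorSpan ℝ hσ.2.1 (hss (intrinsicInterior_subset ht))
  obtain ⟨δ, hsδ, hδ⟩ := ((eventually_add_smul_mem_of_mem_intrinsicInterior hs hdir).filter_mono
    nhdsWithin_le_nhds |>.and (self_mem_nhdsWithin (s := Ioi 0))).exists
  have hδt : δ • t ∈ intrinsicInterior ℝ σ' := by
    rw [← hσ'.smul_set_eq hcone hδ, intrinsicInterior_smul₀ (ne_of_gt hδ)]
    exact smul_mem_smul_set ht
  refine hD _ _ (ha _ hδt) ?_
  convert hσ.1 hsδ using 1
  module

/-- If `σ' ⊆ σ` are faces then `D^{σ'} ⊆ D^σ`. -/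
theorem upSet_mono_faces {n : ℕ} (C D σ σ' : Set (Fin n → ℝ))
    (hC : IsPolyCone C) (hpointed : C ∩ (-C) = {0}) (hspan : C - C = Set.univ)
    (hD : IsDownset C D) (hσ : IsConeFace σ C) (hσ' : IsConeFace σ' C)
    (hss : σ' ⊆ σ) :
    upSet D σ' ⊆ upSet D σ :=
  upSet_mono_faces_general C D σ σ' hC hD hσ hσ' hss
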